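/- Let H be a separable infinite-dimensional complex Hilbert space with a fixed orthonormal basis (e_n)_{n∈ℕ}, and equip S_2(H) with the Schur product ⋆. Then every bounded bilinear form m : S_2(H) × S_2(H) → ℂ is biregular with respect to the Schur product: for all sequences (S^{(i)}), (S̃^{(j)}) and (T^{(i)}), (T̃^{(j)}) in the closed unit ball of S_2(H) such that the iterated limits lim_i lim_j m(S^{(i)} ⋆ S̃^{(j)}, T^{(i)} ⋆ T̃^{(j)}) and lim_j lim_i m(S^{(i)} ⋆ S̃^{(j)}, T^{(i)} ⋆ T̃^{(j)}) both exist, these two iterated limits are equal. -/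

import Mathlib

open Filter Topology

noncomputable section

variable {H : Type} [NormedAddCommGroup H] [InnerProductSpace ℂ H] [CompleteSpace H]

/-- The matrix entry `T_{rs} = ⟨T e_s, e_r⟩` of an operator with respect to the fixed
orthonormal basis `(e_n) = b`. -/
def entry (b : HilbertBasis ℕ ℂ H) (T : H →L[ℂ] H) (r s : ℕ) : ℂ := inner ℂ (b r) (T (b s))

/-- `T` is a Hilbert–Schmidt operator, i.e. its matrix is square-summable. -/
def IsHSb (b : HilbertBasis ℕ ℂ H) (T : H →L[ℂ] H) : Prop :=
  Summable fun rs : ℕ × ℕ => ‖entry b T rs.1 rs.2‖ ^ 2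

/-- The Hilbert–Schmidt norm `‖T‖₂`. -/
def hsNormb (b : HilbertBasis ℕ ℂ H) (T : H →L[ℂ] H) : ℝ :=
  Real.sqrt (∑' rs : ℕ × ℕ, ‖entry b T rs.1 rs.2‖ ^ 2)

/-- The Hilbert–Schmidt inner product `⟨S, W⟩ = Tr (W* S) = ∑ conj (W_{rs}) * S_{rs}`. -/
def hsInnerb (b : HilbertBasis ℕ ℂ H) (S W : H →L[ℂ] H) : ℂ :=
  ∑' rs : ℕ × ℕ, starRingEnd ℂ (entry b W rs.1 rs.2) * entry b S rs.1 rs.2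

/-- `W` is the Schur (entrywise) product `S ⋆ U` with respect to the basis `b`:
`W_{rs} = S_{rs} U_{rs}` for all `r, s`. -/
def IsSchurProd (b : HilbertBasis ℕ ℂ H) (S U W : H →L[ℂ] H) : Prop :=
  ∀ r s, entry b W r s = entry b S r s * entry b U r s

variable (b : HilbertBasis ℕ ℂ H)

/-- `m` is a bounded bilinear form on `S_2(H) × S_2(H)`. -/
structure IsHSbBilinearForm (m : (H →L[ℂ] H) → (H →L[ℂ] H) → ℂ) : Prop where
  add_left : ∀ S S' T, IsHSb b S → IsHSb b S' → IsHSb b T → m (S + S') T = m S T + m S' T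
  smul_left : ∀ (c : ℂ) S T, IsHSb b S → IsHSb b T → m (c • S) T = c * m S T
  add_right : ∀ S T T', IsHSb b S → IsHSb b T → IsHSb b T' → m S (T + T') = m S T + m S T'
  smul_right : ∀ (c : ℂ) S T, IsHSb b S → IsHSb b T → m S (c • T) = c * m S T
  bound : ∃ C : ℝ, ∀ S T, IsHSb b S → IsHSb b T → ‖m S T‖ ≤ C * hsNormb b S * hsNormb b T


section SchurAux

set_option linter.unusedSectionVars false


lemma entry_sub (X Y : H →L[ℂ] H) (r s : ℕ) :
    entry b (X - Y) r s = entry b X r s - entry b Y r s := by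
  simp [entry, inner_sub_right]

lemma parseval (w : H) :
    HasSum (fun r : ℕ => ‖(inner ℂ (b r) w : ℂ)‖ ^ 2) (‖w‖ ^ 2) := by
  have h := b.hasSum_inner_mul_inner w w
  have h2 : HasSum (fun r : ℕ => ((‖(inner ℂ (b r) w : ℂ)‖ ^ 2 : ℝ) : ℂ))
      (((‖w‖ ^ 2 : ℝ) : ℂ)) := by
    convert h using 2 with r
    · rfl
    · rw [← inner_conj_symm w (b r), Complex.conj_mul']; push_cast; ring
    · rw [inner_self_eq_norm_sq_to_K]; norm_cast
  exact Complex.hasSum_ofReal.1 h2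

lemma hasSum_col (X : H →L[ℂ] H) (s : ℕ) :
    HasSum (fun r : ℕ => ‖entry b X r s‖ ^ 2) (‖X (b s)‖ ^ 2) := parseval b (X (b s))

lemma hsNormb_nonneg (X : H →L[ℂ] H) : 0 ≤ hsNormb b X := Real.sqrt_nonneg _

lemma hsNormb_sq (X : H →L[ℂ] H) :
    hsNormb b X ^ 2 = ∑' rs : ℕ × ℕ, ‖entry b X rs.1 rs.2‖ ^ 2 :=
  Real.sq_sqrt (tsum_nonneg fun _ => sq_nonneg _)

lemma summable_col (X : H →L[ℂ] H) (hX : IsHSb b X) :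
    Summable fun s : ℕ => ‖X (b s)‖ ^ 2 := by
  have hsw : Summable fun sr : ℕ × ℕ => ‖entry b X sr.2 sr.1‖ ^ 2 := by
    have := (Equiv.prodComm ℕ ℕ).summable_iff.2 hX
    simpa [Function.comp_def] using this
  have h := hsw.prod
  exact h.congr fun s => ((hasSum_col b X s).tsum_eq)

lemma col_sum_le (X : H →L[ℂ] H) (hX : IsHSb b X) (F : Finset ℕ) :
    ∑ s ∈ F, ‖X (b s)‖ ^ 2 ≤ hsNormb b X ^ 2 := by
  rw [hsNormb_sq]
  have hsw : Summable fun sr : ℕ × ℕ => ‖entry b X sr.2 sr.1‖ ^ 2 := by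
    have := (Equiv.prodComm ℕ ℕ).summable_iff.2 hX
    simpa [Function.comp_def] using this
  have heq : (∑' rs : ℕ × ℕ, ‖entry b X rs.1 rs.2‖ ^ 2)
      = ∑' s : ℕ, ∑' r : ℕ, ‖entry b X r s‖ ^ 2 := by
    rw [← hsw.tsum_prod]
    exact ((Equiv.prodComm ℕ ℕ).tsum_eq _).symm
  rw [heq]
  have hcol : ∀ s, ‖X (b s)‖ ^ 2 = ∑' r : ℕ, ‖entry b X r s‖ ^ 2 :=
    fun s => ((hasSum_col b X s).tsum_eq).symm
  calc ∑ s ∈ F, ‖X (b s)‖ ^ 2 = ∑ s ∈ F, ∑' r : ℕ, ‖entry b X r s‖ ^ 2 := by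
        simp_rw [hcol]
    _ ≤ ∑' s : ℕ, ∑' r : ℕ, ‖entry b X r s‖ ^ 2 := by
        apply Summable.sum_le_tsum F (fun s _ => tsum_nonneg fun _ => sq_nonneg _)
        have := (summable_col b X hX)
        exact this.congr fun s => ((hasSum_col b X s).tsum_eq).symm

lemma opNorm_le_hsNormb (X : H →L[ℂ] H) (hX : IsHSb b X) : ‖X‖ ≤ hsNormb b X := by
  refine X.opNorm_le_bound (hsNormb_nonneg b X) (fun v => ?_)
  -- X v = ∑' s, repr v s • X (b s)
  have hrep : HasSum (fun s : ℕ => b.repr v s • X (b s)) (X v) := by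
    have := (b.hasSum_repr v).mapL X
    simpa using this
  have hP : ∀ s : ℕ, ‖b.repr v s • X (b s)‖ = ‖b.repr v s‖ * ‖X (b s)‖ :=
    fun s => norm_smul _ _
  have hvsq : HasSum (fun s : ℕ => ‖b.repr v s‖ ^ 2) (‖v‖ ^ 2) := by
    have := parseval b v
    simpa [b.repr_apply_apply] using this
  have hSumP : Summable fun s : ℕ => ‖b.repr v s‖ * ‖X (b s)‖ := by
    apply Summable.of_nonneg_of_le (fun s => by positivity)
      (fun s => ?_) (((hvsq.summable.add (summable_col b X hX)).div_const 2))
    have h2 : 2 * (‖b.repr v s‖ * ‖X (b s)‖) ≤ ‖b.repr v s‖ ^ 2 + ‖X (b s)‖ ^ 2 := by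
      have := two_mul_le_add_sq (‖b.repr v s‖) (‖X (b s)‖); linarith
    linarith
  have hle : ‖X v‖ ≤ ∑' s : ℕ, ‖b.repr v s‖ * ‖X (b s)‖ := by
    have hs2 : Summable fun s : ℕ => ‖b.repr v s • X (b s)‖ := by
      simpa only [hP] using hSumP
    calc ‖X v‖ = ‖∑' s : ℕ, b.repr v s • X (b s)‖ := by rw [hrep.tsum_eq]
      _ ≤ ∑' s : ℕ, ‖b.repr v s • X (b s)‖ := norm_tsum_le_tsum_norm hs2
      _ = ∑' s : ℕ, ‖b.repr v s‖ * ‖X (b s)‖ := by simp_rw [hP]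
  refine hle.trans ?_
  refine Summable.tsum_le_of_sum_le hSumP (fun F => ?_)
  have hcs := Finset.sum_mul_sq_le_sq_mul_sq F (fun s => ‖b.repr v s‖) (fun s => ‖X (b s)‖)
  have h1 : ∑ s ∈ F, ‖b.repr v s‖ ^ 2 ≤ ‖v‖ ^ 2 :=
    sum_le_hasSum F (fun s _ => sq_nonneg _) hvsq
  have h2 : ∑ s ∈ F, ‖X (b s)‖ ^ 2 ≤ hsNormb b X ^ 2 := col_sum_le b X hX F
  have hfin : (∑ s ∈ F, ‖b.repr v s‖ * ‖X (b s)‖) ^ 2 ≤ (hsNormb b X * ‖v‖) ^ 2 := by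
    calc (∑ s ∈ F, ‖b.repr v s‖ * ‖X (b s)‖) ^ 2
        ≤ (∑ s ∈ F, ‖b.repr v s‖ ^ 2) * ∑ s ∈ F, ‖X (b s)‖ ^ 2 := hcs
      _ ≤ ‖v‖ ^ 2 * hsNormb b X ^ 2 := by
          apply mul_le_mul h1 h2 (Finset.sum_nonneg fun s _ => sq_nonneg _) (sq_nonneg _)
      _ = (hsNormb b X * ‖v‖) ^ 2 := by ring
  have hnn : (0:ℝ) ≤ ∑ s ∈ F, ‖b.repr v s‖ * ‖X (b s)‖ :=
    Finset.sum_nonneg fun s _ => by positivity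
  have := Real.sqrt_le_sqrt hfin
  rwa [Real.sqrt_sq hnn, Real.sqrt_sq (mul_nonneg (hsNormb_nonneg b X) (norm_nonneg v))] at this


lemma isHSb_of_le {X : H →L[ℂ] H} (g : ℕ × ℕ → ℝ) (hg : Summable g)
    (hle : ∀ rs : ℕ × ℕ, ‖entry b X rs.1 rs.2‖ ^ 2 ≤ g rs) : IsHSb b X :=
  Summable.of_nonneg_of_le (fun _ => sq_nonneg _) hle hg

lemma isHSb_sub {X Y : H →L[ℂ] H} (hX : IsHSb b X) (hY : IsHSb b Y) :
    IsHSb b (X - Y) := by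
  apply isHSb_of_le b
    (fun rs => 2 * ‖entry b X rs.1 rs.2‖ ^ 2 + 2 * ‖entry b Y rs.1 rs.2‖ ^ 2)
    ((hX.mul_left 2).add (hY.mul_left 2))
  intro rs
  rw [entry_sub]
  have h1 := norm_sub_le (entry b X rs.1 rs.2) (entry b Y rs.1 rs.2)
  have h2 := norm_nonneg (entry b X rs.1 rs.2 - entry b Y rs.1 rs.2)
  have h3 := pow_le_pow_left₀ h2 h1 2
  nlinarith [sq_nonneg (‖entry b X rs.1 rs.2‖ - ‖entry b Y rs.1 rs.2‖)]

lemma norm_entry_le_hsNormb {X : H →L[ℂ] H} (hX : IsHSb b X) (r s : ℕ) :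
    ‖entry b X r s‖ ≤ hsNormb b X := by
  have h1 : ‖entry b X r s‖ ^ 2 ≤ ∑' rs : ℕ × ℕ, ‖entry b X rs.1 rs.2‖ ^ 2 :=
    Summable.le_tsum hX (r, s) fun _ _ => sq_nonneg _
  have h2 := Real.sqrt_le_sqrt h1
  rwa [Real.sqrt_sq (norm_nonneg _)] at h2

lemma isHSb_of_factor {X : H →L[ℂ] H} (c v : ℕ × ℕ → ℂ)
    (hent : ∀ r s : ℕ, entry b X r s = c (r, s) * v (r, s))
    (hc : Summable fun k => ‖c k‖ ^ 2) (hv : ∀ k, ‖v k‖ ≤ 1) : IsHSb b X := by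
  apply isHSb_of_le b (fun k => ‖c k‖ ^ 2) hc
  rintro ⟨r, s⟩
  rw [hent r s]
  exact pow_le_pow_left₀ (norm_nonneg _)
    (by rw [norm_mul]; exact mul_le_of_le_one_right (norm_nonneg _) (hv (r, s))) 2

lemma hsNormb_le_one {X : H →L[ℂ] H} (hX : IsHSb b X) (c v : ℕ × ℕ → ℂ)
    (hent : ∀ r s : ℕ, entry b X r s = c (r, s) * v (r, s))
    (hc : Summable fun k => ‖c k‖ ^ 2) (hc1 : (∑' k : ℕ × ℕ, ‖c k‖ ^ 2) ≤ 1)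
    (hv : ∀ k, ‖v k‖ ≤ 1) : hsNormb b X ≤ 1 := by
  have hle : ∀ k : ℕ × ℕ, ‖entry b X k.1 k.2‖ ^ 2 ≤ ‖c k‖ ^ 2 := by
    rintro ⟨r, s⟩
    rw [hent r s]
    exact pow_le_pow_left₀ (norm_nonneg _)
      (by rw [norm_mul]; exact mul_le_of_le_one_right (norm_nonneg _) (hv (r, s))) 2
  have ht : (∑' k : ℕ × ℕ, ‖entry b X k.1 k.2‖ ^ 2) ≤ 1 :=
    le_trans (Summable.tsum_le_tsum hle hX hc) hc1
  calc hsNormb b X ≤ Real.sqrt 1 := Real.sqrt_le_sqrt ht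
    _ = 1 := Real.sqrt_one

lemma fatou_sq (a : ℕ → ℕ × ℕ → ℂ) (a' : ℕ × ℕ → ℂ)
    (hsum : ∀ n, Summable fun k => ‖a n k‖ ^ 2)
    (h1 : ∀ n, (∑' k : ℕ × ℕ, ‖a n k‖ ^ 2) ≤ 1)
    (hconv : ∀ k, Tendsto (fun n => a n k) atTop (𝓝 (a' k))) :
    (Summable fun k => ‖a' k‖ ^ 2) ∧ (∑' k : ℕ × ℕ, ‖a' k‖ ^ 2) ≤ 1 := by
  have hF : ∀ F : Finset (ℕ × ℕ), (∑ k ∈ F, ‖a' k‖ ^ 2) ≤ 1 := by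
    intro F
    have ht : Tendsto (fun n => ∑ k ∈ F, ‖a n k‖ ^ 2) atTop (𝓝 (∑ k ∈ F, ‖a' k‖ ^ 2)) :=
      tendsto_finset_sum F fun k _ => ((hconv k).norm).pow 2
    exact le_of_tendsto ht (Eventually.of_forall fun n =>
      (Summable.sum_le_tsum F (fun _ _ => sq_nonneg _) (hsum n)).trans (h1 n))
  have hsumm : Summable fun k => ‖a' k‖ ^ 2 :=
    summable_of_sum_le (fun _ => sq_nonneg _) hF
  exact ⟨hsumm, Summable.tsum_le_of_sum_le hsumm hF⟩

lemma fatou_bound (a : ℕ → ℕ × ℕ → ℂ) (a' : ℕ × ℕ → ℂ) (M : ℝ)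
    (hb : ∀ n k, ‖a n k‖ ≤ M)
    (hconv : ∀ k, Tendsto (fun n => a n k) atTop (𝓝 (a' k))) :
    ∀ k, ‖a' k‖ ≤ M :=
  fun k => le_of_tendsto ((hconv k).norm) (Eventually.of_forall fun n => hb n k)

lemma tail_tendsto (w : ℕ × ℕ → ℝ) (hw0 : ∀ k, 0 ≤ w k) (hw : Summable w)
    (u : ℕ → ℕ × ℕ → ℂ) (v : ℕ × ℕ → ℂ) (hub : ∀ n k, ‖u n k - v k‖ ≤ 2)
    (huv : ∀ k, Tendsto (fun n => u n k) atTop (𝓝 (v k))) :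
    Tendsto (fun n => ∑' k : ℕ × ℕ, w k * ‖u n k - v k‖ ^ 2) atTop (𝓝 0) := by
  have hsn : ∀ n, Summable fun k => w k * ‖u n k - v k‖ ^ 2 := by
    intro n
    apply Summable.of_nonneg_of_le (fun k => mul_nonneg (hw0 k) (sq_nonneg _))
      (fun k => ?_) (hw.mul_left 4)
    have h4 : ‖u n k - v k‖ ^ 2 ≤ 4 := by nlinarith [hub n k, norm_nonneg (u n k - v k)]
    nlinarith [hw0 k]
  rw [Metric.tendsto_atTop]
  intro ε hε
  obtain ⟨F, hF⟩ := (hw.hasSum.eventually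
    (Metric.ball_mem_nhds (∑' k, w k) (show (0:ℝ) < ε / 16 by linarith))).exists
  have hsplit := Summable.sum_add_tsum_compl (s := F) hw
  have htail : (∑' k : ↑((F : Set (ℕ × ℕ))ᶜ), w ↑k) < ε / 16 := by
    have hd : dist (∑ k ∈ F, w k) (∑' k, w k) < ε / 16 := hF
    rw [Real.dist_eq] at hd
    have habs := abs_lt.1 hd
    linarith [hsplit]
  have hfin : Tendsto (fun n => ∑ k ∈ F, w k * ‖u n k - v k‖ ^ 2) atTop (𝓝 0) := by
    have hterm : ∀ k ∈ F, Tendsto (fun n => w k * ‖u n k - v k‖ ^ 2) atTop (𝓝 0) := by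
      intro k _
      have h0 : Tendsto (fun n => u n k - v k) atTop (𝓝 (v k - v k)) :=
        (huv k).sub tendsto_const_nhds
      rw [sub_self] at h0
      have h1 : Tendsto (fun n => ‖u n k - v k‖ ^ 2) atTop (𝓝 0) := by
        simpa using (h0.norm).pow 2
      simpa using h1.const_mul (w k)
    have := tendsto_finset_sum F hterm
    simpa using this
  obtain ⟨N, hN⟩ := (Metric.tendsto_atTop.1 hfin) (ε / 2) (by linarith)
  refine ⟨N, fun n hn => ?_⟩
  have hsplitn := Summable.sum_add_tsum_compl (s := F) (hsn n)
  have htailn : (∑' k : ↑((F : Set (ℕ × ℕ))ᶜ), w ↑k * ‖u n ↑k - v ↑k‖ ^ 2) ≤ 4 * (ε / 16) := by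
    have hcomp : ∀ k : ↑((F : Set (ℕ × ℕ))ᶜ),
        w ↑k * ‖u n ↑k - v ↑k‖ ^ 2 ≤ 4 * w ↑k := by
      intro k
      have h4 : ‖u n (k : ℕ × ℕ) - v (k : ℕ × ℕ)‖ ^ 2 ≤ 4 := by
        nlinarith [hub n (k : ℕ × ℕ), norm_nonneg (u n (k : ℕ × ℕ) - v (k : ℕ × ℕ))]
      nlinarith [hw0 (k : ℕ × ℕ)]
    calc (∑' k : ↑((F : Set (ℕ × ℕ))ᶜ), w ↑k * ‖u n ↑k - v ↑k‖ ^ 2)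
        ≤ ∑' k : ↑((F : Set (ℕ × ℕ))ᶜ), 4 * w ↑k :=
          Summable.tsum_le_tsum hcomp ((hsn n).subtype _) ((hw.mul_left 4).subtype _)
      _ = 4 * ∑' k : ↑((F : Set (ℕ × ℕ))ᶜ), w ↑k := tsum_mul_left
      _ ≤ 4 * (ε / 16) := by
          have h5 := htail.le
          nlinarith [tsum_nonneg (L := SummationFilter.unconditional _) (fun k : ↑((F : Set (ℕ × ℕ))ᶜ) => hw0 (k : ℕ × ℕ))]
  have hfinn : (∑ k ∈ F, w k * ‖u n k - v k‖ ^ 2) < ε / 2 := by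
    have hd := hN n hn
    rw [Real.dist_eq, sub_zero] at hd
    exact (le_abs_self _).trans_lt hd
  have htot : (∑' k : ℕ × ℕ, w k * ‖u n k - v k‖ ^ 2) < ε := by linarith [hsplitn]
  rw [Real.dist_eq, sub_zero,
    abs_of_nonneg (tsum_nonneg fun k => mul_nonneg (hw0 k) (sq_nonneg _))]
  exact htot

lemma tsum_sq_le_one {X : H →L[ℂ] H} (h1 : hsNormb b X ≤ 1) :
    (∑' rs : ℕ × ℕ, ‖entry b X rs.1 rs.2‖ ^ 2) ≤ 1 := by
  rw [← hsNormb_sq]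
  nlinarith [hsNormb_nonneg b X]

lemma entry_tendsto {X : ℕ → H →L[ℂ] H} {A : H →L[ℂ] H}
    (hconv : Tendsto X atTop (𝓝 A)) (r s : ℕ) :
    Tendsto (fun n => entry b (X n) r s) atTop (𝓝 (entry b A r s)) := by
  have hc : Continuous fun Z : H →L[ℂ] H => entry b Z r s := by
    have h1 : Continuous fun Z : H →L[ℂ] H => Z (b s) :=
      (ContinuousLinearMap.apply ℂ H (b s)).continuous
    exact (innerSL ℂ (b r)).continuous.comp h1
  exact (hc.tendsto A).comp hconv

lemma ext_of_entry {X Y : H →L[ℂ] H} (h : ∀ r s, entry b X r s = entry b Y r s) :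
    X = Y := by
  have hbs : ∀ s, X (b s) = Y (b s) := by
    intro s
    have h0 : b.repr (X (b s)) = b.repr (Y (b s)) := by
      ext r
      rw [b.repr_apply_apply, b.repr_apply_apply]
      exact h r s
    exact b.repr.injective h0
  have hd : Dense ((Submodule.span ℂ (Set.range (b : ℕ → H)) : Submodule ℂ H) : Set H) :=
    Submodule.dense_iff_topologicalClosure_eq_top.2 b.dense_span
  refine ContinuousLinearMap.ext_on hd ?_
  rintro x ⟨s, rfl⟩
  exact hbs s

lemma summable_wd (c : ℕ × ℕ → ℂ) (hc : Summable fun k => ‖c k‖ ^ 2)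
    (d : ℕ × ℕ → ℂ) (hd : ∀ k, ‖d k‖ ≤ 2) :
    Summable fun k => ‖c k‖ ^ 2 * ‖d k‖ ^ 2 := by
  apply Summable.of_nonneg_of_le (fun k => mul_nonneg (sq_nonneg _) (sq_nonneg _))
    (fun k => ?_) (hc.mul_left 4)
  have h4 : ‖d k‖ ^ 2 ≤ 4 := by nlinarith [hd k, norm_nonneg (d k)]
  nlinarith [sq_nonneg ‖c k‖]

lemma lim_construct (c : ℕ × ℕ → ℂ) (hc : Summable fun k => ‖c k‖ ^ 2)
    (X : ℕ → H →L[ℂ] H) (hX : ∀ n, IsHSb b (X n))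
    (u : ℕ → ℕ × ℕ → ℂ) (v : ℕ × ℕ → ℂ)
    (hent : ∀ n (r s : ℕ), entry b (X n) r s = c (r, s) * u n (r, s))
    (hu1 : ∀ n k, ‖u n k‖ ≤ 1) (hv1 : ∀ k, ‖v k‖ ≤ 1)
    (huv : ∀ k, Tendsto (fun n => u n k) atTop (𝓝 (v k))) :
    ∃ A : H →L[ℂ] H, IsHSb b A ∧ (∀ r s : ℕ, entry b A r s = c (r, s) * v (r, s)) ∧
      Tendsto (fun n => hsNormb b (X n - A)) atTop (𝓝 0) := by
  set w : ℕ × ℕ → ℝ := fun k => ‖c k‖ ^ 2 with hwdef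
  set D : ℕ → ℝ := fun n => ∑' k : ℕ × ℕ, w k * ‖u n k - v k‖ ^ 2 with hDdef
  have hub : ∀ n k, ‖u n k - v k‖ ≤ 2 := fun n k =>
    (norm_sub_le _ _).trans (by linarith [hu1 n k, hv1 k])
  have hD : Tendsto D atTop (𝓝 0) := tail_tendsto w (fun k => sq_nonneg _) hc u v hub huv
  have hD0 : ∀ n, 0 ≤ D n :=
    fun n => tsum_nonneg fun k => mul_nonneg (sq_nonneg _) (sq_nonneg _)
  have hsw : ∀ n, Summable fun k => w k * ‖u n k - v k‖ ^ 2 :=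
    fun n => summable_wd c hc _ (hub n)
  -- HS-norm-squared bound for differences
  have hsq : ∀ p q : ℕ, hsNormb b (X p - X q) ^ 2 ≤ 2 * D p + 2 * D q := by
    intro p q
    rw [hsNormb_sq]
    have hptw : ∀ rs : ℕ × ℕ, ‖entry b (X p - X q) rs.1 rs.2‖ ^ 2 ≤
        2 * (w rs * ‖u p rs - v rs‖ ^ 2) + 2 * (w rs * ‖u q rs - v rs‖ ^ 2) := by
      rintro ⟨r, s⟩
      rw [entry_sub, hent, hent]
      have heq : c (r, s) * u p (r, s) - c (r, s) * u q (r, s)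
          = c (r, s) * ((u p (r, s) - v (r, s)) - (u q (r, s) - v (r, s))) := by ring
      rw [heq, norm_mul, mul_pow]
      have h1 := norm_sub_le (u p (r, s) - v (r, s)) (u q (r, s) - v (r, s))
      have h2 := norm_nonneg ((u p (r, s) - v (r, s)) - (u q (r, s) - v (r, s)))
      have h3 := pow_le_pow_left₀ h2 h1 2
      have h4 := sq_nonneg (‖u p (r, s) - v (r, s)‖ - ‖u q (r, s) - v (r, s)‖)
      have h5 := sq_nonneg ‖c (r, s)‖
      have hwrs : w (r, s) = ‖c (r, s)‖ ^ 2 := rfl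
      rw [hwrs]
      nlinarith
    calc (∑' rs : ℕ × ℕ, ‖entry b (X p - X q) rs.1 rs.2‖ ^ 2)
        ≤ ∑' rs : ℕ × ℕ, (2 * (w rs * ‖u p rs - v rs‖ ^ 2)
            + 2 * (w rs * ‖u q rs - v rs‖ ^ 2)) :=
          Summable.tsum_le_tsum hptw (isHSb_sub b (hX p) (hX q))
            (((hsw p).mul_left 2).add ((hsw q).mul_left 2))
      _ = 2 * D p + 2 * D q := by
          rw [Summable.tsum_add ((hsw p).mul_left 2) ((hsw q).mul_left 2),
            tsum_mul_left, tsum_mul_left]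
  -- Cauchy in operator norm
  have hcauchy : CauchySeq X := by
    rw [Metric.cauchySeq_iff]
    intro ε hε
    obtain ⟨N, hN⟩ := (Metric.tendsto_atTop.1 hD) (ε ^ 2 / 8) (by positivity)
    refine ⟨N, fun p hp q hq => ?_⟩
    have hDp : D p < ε ^ 2 / 8 := by
      have := hN p hp; rwa [Real.dist_eq, sub_zero, abs_of_nonneg (hD0 p)] at this
    have hDq : D q < ε ^ 2 / 8 := by
      have := hN q hq; rwa [Real.dist_eq, sub_zero, abs_of_nonneg (hD0 q)] at this
    have hle1 : ‖X p - X q‖ ≤ hsNormb b (X p - X q) :=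
      opNorm_le_hsNormb b _ (isHSb_sub b (hX p) (hX q))
    have h2 := hsq p q
    rw [dist_eq_norm]
    nlinarith [hsNormb_nonneg b (X p - X q), norm_nonneg (X p - X q)]
  obtain ⟨A, hA⟩ := cauchySeq_tendsto_of_complete hcauchy
  -- entries of A
  have entA : ∀ r s : ℕ, entry b A r s = c (r, s) * v (r, s) := by
    intro r s
    have h1 : Tendsto (fun n => entry b (X n) r s) atTop (𝓝 (entry b A r s)) :=
      entry_tendsto b hA r s
    have h2 : Tendsto (fun n => entry b (X n) r s) atTop (𝓝 (c (r, s) * v (r, s))) := by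
      simp_rw [hent]
      exact (huv (r, s)).const_mul (c (r, s))
    exact tendsto_nhds_unique h1 h2
  have hAHS : IsHSb b A := isHSb_of_factor b c v entA hc hv1
  refine ⟨A, hAHS, entA, ?_⟩
  -- hsNormb (X n - A) = sqrt (D n) → 0
  have hnorm : ∀ n, hsNormb b (X n - A) = Real.sqrt (D n) := by
    intro n
    unfold hsNormb
    congr 1
    apply tsum_congr
    rintro ⟨r, s⟩
    rw [entry_sub, hent, entA]
    have heq : c (r, s) * u n (r, s) - c (r, s) * v (r, s)
        = c (r, s) * (u n (r, s) - v (r, s)) := by ring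
    rw [heq, norm_mul, mul_pow]
  simp_rw [hnorm]
  have := (Real.continuous_sqrt.tendsto 0).comp hD
  simpa [Function.comp_def] using this

lemma m_cont (m : (H →L[ℂ] H) → (H →L[ℂ] H) → ℂ) (hm : IsHSbBilinearForm b m)
    (C : ℝ)
    (hC : ∀ S T, IsHSb b S → IsHSb b T → ‖m S T‖ ≤ C * hsNormb b S * hsNormb b T)
    {X X' Y Y' : H →L[ℂ] H} (hX : IsHSb b X) (hX' : IsHSb b X')
    (hY : IsHSb b Y) (hY' : IsHSb b Y') :
    ‖m X Y - m X' Y'‖ ≤ C * hsNormb b (X - X') * hsNormb b Y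
      + C * hsNormb b X' * hsNormb b (Y - Y') := by
  have h1 : m X Y = m (X - X') Y + m X' Y := by
    have := hm.add_left (X - X') X' Y (isHSb_sub b hX hX') hX' hY
    rwa [show X - X' + X' = X by abel] at this
  have h2 : m X' Y = m X' (Y - Y') + m X' Y' := by
    have := hm.add_right X' (Y - Y') Y' hX' (isHSb_sub b hY hY') hY'
    rwa [show Y - Y' + Y' = Y by abel] at this
  have heq : m X Y - m X' Y' = m (X - X') Y + m X' (Y - Y') := by
    rw [h1, h2]; ring
  rw [heq]
  exact (norm_add_le _ _).trans (add_le_add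
    (hC _ _ (isHSb_sub b hX hX') hY) (hC _ _ hX' (isHSb_sub b hY hY')))

lemma m_tendsto (m : (H →L[ℂ] H) → (H →L[ℂ] H) → ℂ) (hm : IsHSbBilinearForm b m)
    (C₀ : ℝ) (hC₀ : 0 ≤ C₀)
    (hC : ∀ S T, IsHSb b S → IsHSb b T → ‖m S T‖ ≤ C₀ * hsNormb b S * hsNormb b T)
    (X Y : ℕ → H →L[ℂ] H) (A B : H →L[ℂ] H)
    (hX : ∀ n, IsHSb b (X n)) (hY : ∀ n, IsHSb b (Y n))
    (hA : IsHSb b A) (hB : IsHSb b B)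
    (hYn : ∀ n, hsNormb b (Y n) ≤ 1) (hA1 : hsNormb b A ≤ 1)
    (hdX : Tendsto (fun n => hsNormb b (X n - A)) atTop (𝓝 0))
    (hdY : Tendsto (fun n => hsNormb b (Y n - B)) atTop (𝓝 0)) :
    Tendsto (fun n => m (X n) (Y n)) atTop (𝓝 (m A B)) := by
  have key : ∀ n, ‖m (X n) (Y n) - m A B‖
      ≤ C₀ * hsNormb b (X n - A) + C₀ * hsNormb b (Y n - B) := by
    intro n
    have h1 := m_cont b m hm C₀ hC (hX n) hA (hY n) hB
    have e1 : C₀ * hsNormb b (X n - A) * hsNormb b (Y n)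
        ≤ C₀ * hsNormb b (X n - A) := by
      have h5 := mul_nonneg hC₀ (hsNormb_nonneg b (X n - A))
      nlinarith [hYn n, hsNormb_nonneg b (Y n)]
    have e2 : C₀ * hsNormb b A * hsNormb b (Y n - B)
        ≤ C₀ * hsNormb b (Y n - B) := by
      have h3 := hsNormb_nonneg b (Y n - B)
      have h4 := hsNormb_nonneg b A
      nlinarith [hA1, mul_nonneg hC₀ h3]
    linarith
  have h0 : Tendsto (fun n => m (X n) (Y n) - m A B) atTop (𝓝 0) := by
    apply squeeze_zero_norm key
    have := (hdX.const_mul C₀).add (hdY.const_mul C₀)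
    simpa using this
  have := h0.add (tendsto_const_nhds (x := m A B))
  simpa using this

lemma extract_pair (u : ℕ → ℕ × ℕ → ℂ × ℂ) (hu : ∀ n k, ‖u n k‖ ≤ 1) :
    ∃ (v : ℕ × ℕ → ℂ × ℂ) (φ : ℕ → ℕ), StrictMono φ ∧ (∀ k, ‖v k‖ ≤ 1) ∧
      ∀ k, Tendsto (fun n => u (φ n) k) atTop (𝓝 (v k)) := by
  have hK : IsCompact (Set.univ.pi fun _ : ℕ × ℕ => Metric.closedBall (0 : ℂ × ℂ) 1) :=
    isCompact_univ_pi fun _ => isCompact_closedBall _ _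
  have hseq := hK.isSeqCompact
  obtain ⟨v, hv, φ, hφ, hconv⟩ := hseq (x := u) (fun n => Set.mem_univ_pi.2 fun k => by
    simpa [Metric.mem_closedBall, dist_eq_norm] using hu n k)
  refine ⟨v, φ, hφ, fun k => ?_, fun k => (tendsto_pi_nhds.1 hconv) k⟩
  have := hv k (Set.mem_univ k)
  simpa [Metric.mem_closedBall, dist_eq_norm] using this


end SchurAux

/-- **Statement 13.** Let `H` be a separable infinite-dimensional complex Hilbert space with
fixed orthonormal basis `b = (e_n)_{n ∈ ℕ}`, and equip `S_2(H)` with the Schur product `⋆`.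
Every bounded bilinear form `m` on `S_2(H) × S_2(H)` is biregular with respect to the Schur
product: for all sequences `(S i)`, `(S' j)`, `(T i)`, `(T' j)` in the closed unit ball of
`S_2(H)`, if both iterated limits of `m (Sᵢ ⋆ S̃ⱼ, Tᵢ ⋆ T̃ⱼ)` exist then they are equal. -/
theorem schur_biregular
    (m : (H →L[ℂ] H) → (H →L[ℂ] H) → ℂ) (hm : IsHSbBilinearForm b m)
    (S S' T T' : ℕ → H →L[ℂ] H)
    (hS : ∀ i, IsHSb b (S i) ∧ hsNormb b (S i) ≤ 1)
    (hS' : ∀ j, IsHSb b (S' j) ∧ hsNormb b (S' j) ≤ 1)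
    (hT : ∀ i, IsHSb b (T i) ∧ hsNormb b (T i) ≤ 1)
    (hT' : ∀ j, IsHSb b (T' j) ∧ hsNormb b (T' j) ≤ 1)
    (SS TT : ℕ → ℕ → H →L[ℂ] H)
    (hSS : ∀ i j, IsHSb b (SS i j) ∧ IsSchurProd b (S i) (S' j) (SS i j))
    (hTT : ∀ i j, IsHSb b (TT i j) ∧ IsSchurProd b (T i) (T' j) (TT i j))
    (g h : ℕ → ℂ) (L₁ L₂ : ℂ)
    (hg : ∀ i, Tendsto (fun j => m (SS i j) (TT i j)) atTop (𝓝 (g i)))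
    (hgL : Tendsto g atTop (𝓝 L₁))
    (hh : ∀ j, Tendsto (fun i => m (SS i j) (TT i j)) atTop (𝓝 (h j)))
    (hhL : Tendsto h atTop (𝓝 L₂)) :
    L₁ = L₂ := by
  classical
  obtain ⟨C, hCb⟩ := hm.bound
  set C₀ := max C 0 with hC0def
  have hC₀ : (0:ℝ) ≤ C₀ := le_max_right _ _
  have hC : ∀ X Y, IsHSb b X → IsHSb b Y → ‖m X Y‖ ≤ C₀ * hsNormb b X * hsNormb b Y := by
    intro X Y hX hY
    refine (hCb X Y hX hY).trans ?_
    have h5 := mul_nonneg (hsNormb_nonneg b X) (hsNormb_nonneg b Y)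
    nlinarith [le_max_left C 0]
  -- entry bounds
  have hSe : ∀ i (k : ℕ × ℕ), ‖entry b (S i) k.1 k.2‖ ≤ 1 :=
    fun i k => (norm_entry_le_hsNormb b (hS i).1 k.1 k.2).trans (hS i).2
  have hTe : ∀ i (k : ℕ × ℕ), ‖entry b (T i) k.1 k.2‖ ≤ 1 :=
    fun i k => (norm_entry_le_hsNormb b (hT i).1 k.1 k.2).trans (hT i).2
  have hS'e : ∀ j (k : ℕ × ℕ), ‖entry b (S' j) k.1 k.2‖ ≤ 1 :=
    fun j k => (norm_entry_le_hsNormb b (hS' j).1 k.1 k.2).trans (hS' j).2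
  have hT'e : ∀ j (k : ℕ × ℕ), ‖entry b (T' j) k.1 k.2‖ ≤ 1 :=
    fun j k => (norm_entry_le_hsNormb b (hT' j).1 k.1 k.2).trans (hT' j).2
  -- extraction for rows
  obtain ⟨pST, φ, hφ, hpST1, hpSTconv⟩ := extract_pair
    (fun i k => (entry b (S i) k.1 k.2, entry b (T i) k.1 k.2))
    (fun i k => by
      rw [Prod.norm_def]
      exact max_le (hSe i k) (hTe i k))
  obtain ⟨pST', ψ, hψ, hpST'1, hpST'conv⟩ := extract_pair
    (fun j k => (entry b (S' j) k.1 k.2, entry b (T' j) k.1 k.2))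
    (fun j k => by
      rw [Prod.norm_def]
      exact max_le (hS'e j k) (hT'e j k))
  -- named entry sequences
  set sF : ℕ → ℕ × ℕ → ℂ := fun i k => entry b (S (φ i)) k.1 k.2 with hsFdef
  set tF : ℕ → ℕ × ℕ → ℂ := fun i k => entry b (T (φ i)) k.1 k.2 with htFdef
  set s'F : ℕ → ℕ × ℕ → ℂ := fun j k => entry b (S' (ψ j)) k.1 k.2 with hs'Fdef
  set t'F : ℕ → ℕ × ℕ → ℂ := fun j k => entry b (T' (ψ j)) k.1 k.2 with ht'Fdef
  set sL : ℕ × ℕ → ℂ := fun k => (pST k).1 with hsLdef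
  set tL : ℕ × ℕ → ℂ := fun k => (pST k).2 with htLdef
  set s'L : ℕ × ℕ → ℂ := fun k => (pST' k).1 with hs'Ldef
  set t'L : ℕ × ℕ → ℂ := fun k => (pST' k).2 with ht'Ldef
  -- componentwise convergence
  have hsconv : ∀ k, Tendsto (fun i => sF i k) atTop (𝓝 (sL k)) :=
    fun k => (continuous_fst.tendsto _).comp (hpSTconv k)
  have htconv : ∀ k, Tendsto (fun i => tF i k) atTop (𝓝 (tL k)) :=
    fun k => (continuous_snd.tendsto _).comp (hpSTconv k)
  have hs'conv : ∀ k, Tendsto (fun j => s'F j k) atTop (𝓝 (s'L k)) :=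
    fun k => (continuous_fst.tendsto _).comp (hpST'conv k)
  have ht'conv : ∀ k, Tendsto (fun j => t'F j k) atTop (𝓝 (t'L k)) :=
    fun k => (continuous_snd.tendsto _).comp (hpST'conv k)
  -- bounds on limits
  have hsL1 : ∀ k, ‖sL k‖ ≤ 1 := fun k => (norm_fst_le (pST k)).trans (hpST1 k)
  have htL1 : ∀ k, ‖tL k‖ ≤ 1 := fun k => (norm_snd_le (pST k)).trans (hpST1 k)
  have hs'L1 : ∀ k, ‖s'L k‖ ≤ 1 := fun k => (norm_fst_le (pST' k)).trans (hpST'1 k)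
  have ht'L1 : ∀ k, ‖t'L k‖ ≤ 1 := fun k => (norm_snd_le (pST' k)).trans (hpST'1 k)
  -- summability data
  have hsFsum : ∀ i, Summable fun k => ‖sF i k‖ ^ 2 := fun i => (hS (φ i)).1
  have htFsum : ∀ i, Summable fun k => ‖tF i k‖ ^ 2 := fun i => (hT (φ i)).1
  have hs'Fsum : ∀ j, Summable fun k => ‖s'F j k‖ ^ 2 := fun j => (hS' (ψ j)).1
  have ht'Fsum : ∀ j, Summable fun k => ‖t'F j k‖ ^ 2 := fun j => (hT' (ψ j)).1
  have hsFts : ∀ i, (∑' k : ℕ × ℕ, ‖sF i k‖ ^ 2) ≤ 1 := fun i => tsum_sq_le_one b (hS (φ i)).2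
  have htFts : ∀ i, (∑' k : ℕ × ℕ, ‖tF i k‖ ^ 2) ≤ 1 := fun i => tsum_sq_le_one b (hT (φ i)).2
  have hs'Fts : ∀ j, (∑' k : ℕ × ℕ, ‖s'F j k‖ ^ 2) ≤ 1 := fun j => tsum_sq_le_one b (hS' (ψ j)).2
  have ht'Fts : ∀ j, (∑' k : ℕ × ℕ, ‖t'F j k‖ ^ 2) ≤ 1 := fun j => tsum_sq_le_one b (hT' (ψ j)).2
  obtain ⟨hsLsum, hsLts⟩ := fatou_sq sF sL hsFsum hsFts hsconv
  obtain ⟨htLsum, htLts⟩ := fatou_sq tF tL htFsum htFts htconv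
  obtain ⟨hs'Lsum, hs'Lts⟩ := fatou_sq s'F s'L hs'Fsum hs'Fts hs'conv
  obtain ⟨ht'Lsum, ht'Lts⟩ := fatou_sq t'F t'L ht'Fsum ht'Fts ht'conv
  -- entry identities for Schur products
  have hSSent : ∀ i j (r s : ℕ),
      entry b (SS (φ i) (ψ j)) r s = sF i (r, s) * s'F j (r, s) :=
    fun i j r s => (hSS (φ i) (ψ j)).2 r s
  have hTTent : ∀ i j (r s : ℕ),
      entry b (TT (φ i) (ψ j)) r s = tF i (r, s) * t'F j (r, s) :=
    fun i j r s => (hTT (φ i) (ψ j)).2 r s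
  -- norms of Schur products ≤ 1
  have hSSn1 : ∀ i j, hsNormb b (SS (φ i) (ψ j)) ≤ 1 := fun i j =>
    hsNormb_le_one b (hSS (φ i) (ψ j)).1 (sF i) (s'F j) (hSSent i j)
      (hsFsum i) (hsFts i) (fun k => hS'e (ψ j) k)
  have hTTn1 : ∀ i j, hsNormb b (TT (φ i) (ψ j)) ≤ 1 := fun i j =>
    hsNormb_le_one b (hTT (φ i) (ψ j)).1 (tF i) (t'F j) (hTTent i j)
      (htFsum i) (htFts i) (fun k => hT'e (ψ j) k)
  ---- Stage 1: inner limits (j → ∞) for the first iterated limit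
  have hAex : ∀ i, ∃ A, IsHSb b A ∧ (∀ r s : ℕ, entry b A r s = sF i (r, s) * s'L (r, s)) ∧
      Tendsto (fun j => hsNormb b (SS (φ i) (ψ j) - A)) atTop (𝓝 0) :=
    fun i => lim_construct b (sF i) (hsFsum i) (fun j => SS (φ i) (ψ j))
      (fun j => (hSS (φ i) (ψ j)).1) s'F s'L (fun j r s => hSSent i j r s)
      (fun j k => hS'e (ψ j) k) hs'L1 hs'conv
  choose A hAhs hAent hAlim using hAex
  have hBex : ∀ i, ∃ B, IsHSb b B ∧ (∀ r s : ℕ, entry b B r s = tF i (r, s) * t'L (r, s)) ∧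
      Tendsto (fun j => hsNormb b (TT (φ i) (ψ j) - B)) atTop (𝓝 0) :=
    fun i => lim_construct b (tF i) (htFsum i) (fun j => TT (φ i) (ψ j))
      (fun j => (hTT (φ i) (ψ j)).1) t'F t'L (fun j r s => hTTent i j r s)
      (fun j k => hT'e (ψ j) k) ht'L1 ht'conv
  choose B hBhs hBent hBlim using hBex
  have hAn1 : ∀ i, hsNormb b (A i) ≤ 1 := fun i =>
    hsNormb_le_one b (hAhs i) (sF i) s'L (hAent i) (hsFsum i) (hsFts i) hs'L1
  have hBn1 : ∀ i, hsNormb b (B i) ≤ 1 := fun i =>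
    hsNormb_le_one b (hBhs i) (tF i) t'L (hBent i) (htFsum i) (htFts i) ht'L1
  -- g (φ i) = m (A i) (B i)
  have hgval : ∀ i, g (φ i) = m (A i) (B i) := by
    intro i
    have h1 : Tendsto (fun j => m (SS (φ i) (ψ j)) (TT (φ i) (ψ j))) atTop
        (𝓝 (m (A i) (B i))) :=
      m_tendsto b m hm C₀ hC₀ hC (fun j => SS (φ i) (ψ j)) (fun j => TT (φ i) (ψ j))
        (A i) (B i) (fun j => (hSS (φ i) (ψ j)).1) (fun j => (hTT (φ i) (ψ j)).1)
        (hAhs i) (hBhs i) (fun j => hTTn1 i j) (hAn1 i) (hAlim i) (hBlim i)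
    have h2 : Tendsto (fun j => m (SS (φ i) (ψ j)) (TT (φ i) (ψ j))) atTop
        (𝓝 (g (φ i))) := (hg (φ i)).comp (hψ.tendsto_atTop)
    exact tendsto_nhds_unique h2 h1
  ---- Stage 2: outer limit (i → ∞)
  obtain ⟨Ainf, hAinfhs, hAinfent, hAinflim⟩ :=
    lim_construct b s'L hs'Lsum A hAhs sF sL
      (fun i r s => by rw [hAent i r s]; ring)
      (fun i k => hSe (φ i) k) hsL1 hsconv
  obtain ⟨Binf, hBinfhs, hBinfent, hBinflim⟩ :=
    lim_construct b t'L ht'Lsum B hBhs tF tL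
      (fun i r s => by rw [hBent i r s]; ring)
      (fun i k => hTe (φ i) k) htL1 htconv
  have hL₁ : L₁ = m Ainf Binf := by
    have h1 : Tendsto (fun i => g (φ i)) atTop (𝓝 L₁) := hgL.comp (hφ.tendsto_atTop)
    have h2 : Tendsto (fun i => m (A i) (B i)) atTop (𝓝 (m Ainf Binf)) :=
      m_tendsto b m hm C₀ hC₀ hC A B Ainf Binf hAhs hBhs hAinfhs hBinfhs hBn1
        (hsNormb_le_one b hAinfhs s'L sL hAinfent hs'Lsum hs'Lts hsL1)
        hAinflim hBinflim
    have h3 : Tendsto (fun i => g (φ i)) atTop (𝓝 (m Ainf Binf)) := by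
      rw [tendsto_congr hgval]
      exact h2
    exact tendsto_nhds_unique h1 h3
  ---- Stage 3: inner limits (i → ∞) for the second iterated limit
  have hPex : ∀ j, ∃ P, IsHSb b P ∧ (∀ r s : ℕ, entry b P r s = s'F j (r, s) * sL (r, s)) ∧
      Tendsto (fun i => hsNormb b (SS (φ i) (ψ j) - P)) atTop (𝓝 0) :=
    fun j => lim_construct b (s'F j) (hs'Fsum j) (fun i => SS (φ i) (ψ j))
      (fun i => (hSS (φ i) (ψ j)).1) sF sL (fun i r s => by rw [hSSent i j r s]; ring)
      (fun i k => hSe (φ i) k) hsL1 hsconv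
  choose P hPhs hPent hPlim using hPex
  have hQex : ∀ j, ∃ Q, IsHSb b Q ∧ (∀ r s : ℕ, entry b Q r s = t'F j (r, s) * tL (r, s)) ∧
      Tendsto (fun i => hsNormb b (TT (φ i) (ψ j) - Q)) atTop (𝓝 0) :=
    fun j => lim_construct b (t'F j) (ht'Fsum j) (fun i => TT (φ i) (ψ j))
      (fun i => (hTT (φ i) (ψ j)).1) tF tL (fun i r s => by rw [hTTent i j r s]; ring)
      (fun i k => hTe (φ i) k) htL1 htconv
  choose Q hQhs hQent hQlim using hQex
  have hPn1 : ∀ j, hsNormb b (P j) ≤ 1 := fun j =>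
    hsNormb_le_one b (hPhs j) (s'F j) sL (hPent j) (hs'Fsum j) (hs'Fts j) hsL1
  have hQn1 : ∀ j, hsNormb b (Q j) ≤ 1 := fun j =>
    hsNormb_le_one b (hQhs j) (t'F j) tL (hQent j) (ht'Fsum j) (ht'Fts j) htL1
  have hhval : ∀ j, h (ψ j) = m (P j) (Q j) := by
    intro j
    have h1 : Tendsto (fun i => m (SS (φ i) (ψ j)) (TT (φ i) (ψ j))) atTop
        (𝓝 (m (P j) (Q j))) :=
      m_tendsto b m hm C₀ hC₀ hC (fun i => SS (φ i) (ψ j)) (fun i => TT (φ i) (ψ j))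
        (P j) (Q j) (fun i => (hSS (φ i) (ψ j)).1) (fun i => (hTT (φ i) (ψ j)).1)
        (hPhs j) (hQhs j) (fun i => hTTn1 i j) (hPn1 j) (hPlim j) (hQlim j)
    have h2 : Tendsto (fun i => m (SS (φ i) (ψ j)) (TT (φ i) (ψ j))) atTop
        (𝓝 (h (ψ j))) := (hh (ψ j)).comp (hφ.tendsto_atTop)
    exact tendsto_nhds_unique h2 h1
  ---- Stage 4: outer limit (j → ∞)
  obtain ⟨Pinf, hPinfhs, hPinfent, hPinflim⟩ :=
    lim_construct b sL hsLsum P hPhs s'F s'L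
      (fun j r s => by rw [hPent j r s]; ring)
      (fun j k => hS'e (ψ j) k) hs'L1 hs'conv
  obtain ⟨Qinf, hQinfhs, hQinfent, hQinflim⟩ :=
    lim_construct b tL htLsum Q hQhs t'F t'L
      (fun j r s => by rw [hQent j r s]; ring)
      (fun j k => hT'e (ψ j) k) ht'L1 ht'conv
  have hL₂ : L₂ = m Pinf Qinf := by
    have h1 : Tendsto (fun j => h (ψ j)) atTop (𝓝 L₂) := hhL.comp (hψ.tendsto_atTop)
    have h2 : Tendsto (fun j => m (P j) (Q j)) atTop (𝓝 (m Pinf Qinf)) :=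
      m_tendsto b m hm C₀ hC₀ hC P Q Pinf Qinf hPhs hQhs hPinfhs hQinfhs hQn1
        (hsNormb_le_one b hPinfhs sL s'L hPinfent hsLsum hsLts hs'L1)
        hPinflim hQinflim
    have h3 : Tendsto (fun j => h (ψ j)) atTop (𝓝 (m Pinf Qinf)) := by
      rw [tendsto_congr hhval]
      exact h2
    exact tendsto_nhds_unique h1 h3
  -- identification of the two limit operators
  have hAP : Ainf = Pinf := ext_of_entry b fun r s => by
    rw [hAinfent r s, hPinfent r s]; ring
  have hBQ : Binf = Qinf := ext_of_entry b fun r s => by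
    rw [hBinfent r s, hQinfent r s]; ring
  rw [hL₁, hL₂, hAP, hBQ]
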